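/- Let 2 < β < 3 + √3, set η₁ = (β² − 6β + 6)/(2 − β), a = (β² − 5β + 8)/(2(2 − β)), b = 3 − β, c = (β² − 7β + 8)/(2(2 − β)). Let f₀, f₁ : (0,1) → ℝ be differentiable. Then the pair (f₀, f₁) satisfies the system ξ(ξ−1)f₀'(ξ) + (3−β)ξ f₀(ξ) − 2ξ f₁(ξ) = 0 and 2ξ(ξ−1)f₁'(ξ) − (η₁ + 1 + (η₁ − 7 + 2β)ξ)f₁(ξ) + (η₁ − 3)f₀(ξ) = 0 for all ξ ∈ (0,1) if and only if f₀ is twice differentiable on (0,1), f₁(ξ) = ((ξ−1)f₀'(ξ) + (3−β)f₀(ξ))/2 for all ξ ∈ (0,1), and f₀ satisfies the hypergeometric equation ξ(ξ−1)f₀''(ξ) + ((a+b+1)ξ − c)f₀'(ξ) + a b f₀(ξ) = 0 on (0,1). -/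

import Mathlib

/-!
Solving the first equation for `f₁` gives `f₁ = ((ξ - 1) f₀' + (3 - β) f₀) / 2` (the factor `ξ`
is nonzero on `(0,1)`); this expresses `f₀'` through the differentiable `f₀, f₁` away from `ξ = 1`,
so `f₀` is twice differentiable. Substituting `f₁` into the second equation turns it, for the
given `η₁, a, b, c`, into exactly `ξ - 1` times the hypergeometric equation for `f₀`.
-/

open Set Filter Topology

lemma N2_first_eq_iff_eq_half {ξ D F G k : ℝ} (hξ : ξ ≠ 0) :
    ξ * (ξ - 1) * D + k * ξ * F - 2 * ξ * G = 0 ↔ G = ((ξ - 1) * D + k * F) / 2 := by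
  constructor
  · intro h
    have h' : ξ * ((ξ - 1) * D + k * F - 2 * G) = 0 := by linear_combination h
    linarith [(mul_eq_zero.mp h').resolve_left hξ]
  · intro h
    rw [h]
    ring

section EqOnOpen

variable {f₀ f₁ : ℝ → ℝ} {k : ℝ} {s : Set ℝ} {ξ : ℝ}

lemma differentiableAt_deriv_of_eqOn (hs : IsOpen s) (h1 : (1 : ℝ) ∉ s)
    (hf : EqOn f₁ (fun x => ((x - 1) * deriv f₀ x + k * f₀ x) / 2) s) (hξ : ξ ∈ s)
    (hf₀ : DifferentiableAt ℝ f₀ ξ) (hf₁ : DifferentiableAt ℝ f₁ ξ) :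
    DifferentiableAt ℝ (deriv f₀) ξ := by
  have hne : ∀ x ∈ s, x - 1 ≠ 0 := fun x hx h => h1 (by rwa [← sub_eq_zero.mp h])
  have hg : DifferentiableAt ℝ (fun x => (2 * f₁ x - k * f₀ x) / (x - 1)) ξ :=
    ((hf₁.const_mul 2).sub (hf₀.const_mul k)).div (differentiableAt_id.sub_const 1) (hne ξ hξ)
  refine hg.congr_of_eventuallyEq (eventuallyEq_of_mem (hs.mem_nhds hξ) fun x hx => ?_)
  rw [hf hx]
  field_simp [hne x hx]
  ring

lemma deriv_eq_of_eqOn (hs : IsOpen s)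
    (hf : EqOn f₁ (fun x => ((x - 1) * deriv f₀ x + k * f₀ x) / 2) s) (hξ : ξ ∈ s)
    (hf₀ : DifferentiableAt ℝ f₀ ξ) (hf₀' : DifferentiableAt ℝ (deriv f₀) ξ) :
    deriv f₁ ξ = ((ξ - 1) * deriv (deriv f₀) ξ + (k + 1) * deriv f₀ ξ) / 2 := by
  rw [(eventuallyEq_of_mem (hs.mem_nhds hξ) hf).deriv_eq]
  have h : HasDerivAt (fun x => ((x - 1) * deriv f₀ x + k * f₀ x) / 2)
      ((1 * deriv f₀ ξ + (ξ - 1) * deriv (deriv f₀) ξ + k * deriv f₀ ξ) / 2) ξ :=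
    ((((hasDerivAt_id ξ).sub_const 1).mul hf₀'.hasDerivAt).add
      (hf₀.hasDerivAt.const_mul k)).div_const 2
  rw [h.deriv]
  ring

end EqOnOpen

lemma N2_second_eq_eq_sub_one_mul_hypergeometric {β η₁ a b c : ℝ} (hβ : β ≠ 2)
    (hη₁ : η₁ = (β ^ 2 - 6 * β + 6) / (2 - β))
    (ha : a = (β ^ 2 - 5 * β + 8) / (2 * (2 - β)))
    (hb : b = 3 - β)
    (hc : c = (β ^ 2 - 7 * β + 8) / (2 * (2 - β))) (ξ F D D₂ : ℝ) :
    2 * ξ * (ξ - 1) * (((ξ - 1) * D₂ + (3 - β + 1) * D) / 2)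
        - (η₁ + 1 + (η₁ - 7 + 2 * β) * ξ) * (((ξ - 1) * D + (3 - β) * F) / 2)
        + (η₁ - 3) * F
      = (ξ - 1) * (ξ * (ξ - 1) * D₂ + ((a + b + 1) * ξ - c) * D + a * b * F) := by
  have h : (2 : ℝ) - β ≠ 0 := sub_ne_zero.mpr (Ne.symm hβ)
  subst hη₁ ha hb hc
  field_simp
  ring

theorem N2_system_iff_hypergeometric (β η₁ a b c : ℝ)
    (hβ : 2 < β)
    (hη₁ : η₁ = (β ^ 2 - 6 * β + 6) / (2 - β))
    (ha : a = (β ^ 2 - 5 * β + 8) / (2 * (2 - β)))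
    (hb : b = 3 - β)
    (hc : c = (β ^ 2 - 7 * β + 8) / (2 * (2 - β)))
    (f₀ f₁ : ℝ → ℝ)
    (hf₀ : ∀ ξ ∈ Set.Ioo (0 : ℝ) 1, DifferentiableAt ℝ f₀ ξ)
    (hf₁ : ∀ ξ ∈ Set.Ioo (0 : ℝ) 1, DifferentiableAt ℝ f₁ ξ) :
    (∀ ξ ∈ Set.Ioo (0 : ℝ) 1,
        ξ * (ξ - 1) * deriv f₀ ξ + (3 - β) * ξ * f₀ ξ - 2 * ξ * f₁ ξ = 0 ∧
        2 * ξ * (ξ - 1) * deriv f₁ ξ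
          - (η₁ + 1 + (η₁ - 7 + 2 * β) * ξ) * f₁ ξ + (η₁ - 3) * f₀ ξ = 0)
    ↔
    ((∀ ξ ∈ Set.Ioo (0 : ℝ) 1, DifferentiableAt ℝ (deriv f₀) ξ) ∧
     (∀ ξ ∈ Set.Ioo (0 : ℝ) 1,
        f₁ ξ = ((ξ - 1) * deriv f₀ ξ + (3 - β) * f₀ ξ) / 2) ∧
     (∀ ξ ∈ Set.Ioo (0 : ℝ) 1,
        ξ * (ξ - 1) * deriv (deriv f₀) ξ
          + ((a + b + 1) * ξ - c) * deriv f₀ ξ + a * b * f₀ ξ = 0)) := by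
  have first_iff : ∀ ξ ∈ Ioo (0 : ℝ) 1,
      ξ * (ξ - 1) * deriv f₀ ξ + (3 - β) * ξ * f₀ ξ - 2 * ξ * f₁ ξ = 0 ↔
        f₁ ξ = ((ξ - 1) * deriv f₀ ξ + (3 - β) * f₀ ξ) / 2 := fun ξ hξ =>
    N2_first_eq_iff_eq_half hξ.1.ne'
  have second_iff : ∀ ξ ∈ Ioo (0 : ℝ) 1,
      EqOn f₁ (fun x => ((x - 1) * deriv f₀ x + (3 - β) * f₀ x) / 2) (Ioo 0 1) →
      DifferentiableAt ℝ (deriv f₀) ξ →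
      (2 * ξ * (ξ - 1) * deriv f₁ ξ
          - (η₁ + 1 + (η₁ - 7 + 2 * β) * ξ) * f₁ ξ + (η₁ - 3) * f₀ ξ = 0 ↔
        ξ * (ξ - 1) * deriv (deriv f₀) ξ
          + ((a + b + 1) * ξ - c) * deriv f₀ ξ + a * b * f₀ ξ = 0) := by
    intro ξ hξ hf hf₀'
    rw [deriv_eq_of_eqOn isOpen_Ioo hf hξ (hf₀ ξ hξ) hf₀', hf hξ,
      N2_second_eq_eq_sub_one_mul_hypergeometric hβ.ne' hη₁ ha hb hc,
      mul_eq_zero, or_iff_right (sub_ne_zero.mpr hξ.2.ne)]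
  constructor
  · intro hsys
    have hf : EqOn f₁ _ (Ioo 0 1) := fun ξ hξ => (first_iff ξ hξ).1 (hsys ξ hξ).1
    have hf₀' : ∀ ξ ∈ Ioo (0 : ℝ) 1, DifferentiableAt ℝ (deriv f₀) ξ := fun ξ hξ =>
      differentiableAt_deriv_of_eqOn isOpen_Ioo (fun h => lt_irrefl _ h.2) hf hξ
        (hf₀ ξ hξ) (hf₁ ξ hξ)
    exact ⟨hf₀', hf, fun ξ hξ => (second_iff ξ hξ hf (hf₀' ξ hξ)).1 (hsys ξ hξ).2⟩
  · rintro ⟨hf₀', hf, hhyp⟩ ξ hξ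
    exact ⟨(first_iff ξ hξ).2 (hf ξ hξ), (second_iff ξ hξ hf (hf₀' ξ hξ)).2 (hhyp ξ hξ)⟩
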